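/- Let E_κ(z) = exp(z) + κ with Re(κ) ≥ 2, and let z ∈ ℂ with Re(z) ≤ Re(κ) + 1. Then for all k ≥ 1, |E_κ^k(z)| ≤ F^k(|κ| + 2), where F(t) = e^t - 1. -/

import Mathlib

/-- Model function for exponential growth: F(t) = e^t - 1. -/
noncomputable def F (t : ℝ) : ℝ := Real.exp t - 1

/-- The exponential map E_κ(z) = exp(z) + κ. -/
noncomputable def E (κ : ℂ) (z : ℂ) : ℂ := Complex.exp z + κ

/-!
With `c = ‖κ‖ + 2` one proves by induction that `Re (E_κ^k z) ≤ F^k(c) - 1` for every `k ≥ 0`;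
the case `k = 0` is the hypothesis on `z`. The inductive step, and the final bound on the norm,
come from `‖E_κ w‖ ≤ exp (Re w) + ‖κ‖` together with the elementary inequality
`exp (A - 1) + A ≤ exp A` and the growth `c ≤ F^k(c)`.
-/

open Real

lemma le_F (t : ℝ) : t ≤ F t := by
  have := add_one_le_exp t
  rw [F]
  linarith

lemma le_iterate_F (t : ℝ) (k : ℕ) : t ≤ F^[k] t := by
  induction k with
  | zero => rfl
  | succ k ih =>
    rw [Function.iterate_succ_apply']
    exact ih.trans (le_F _)

lemma exp_sub_one_add_le_exp (A : ℝ) : exp (A - 1) + A ≤ exp A := by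
  have hA : A ≤ exp (A - 1) := by simpa using add_one_le_exp (A - 1)
  have he : 2 ≤ exp 1 := by linarith [add_one_le_exp 1]
  have hsplit : exp A = exp (A - 1) * exp 1 := by rw [← exp_add, sub_add_cancel]
  nlinarith [exp_pos (A - 1)]

lemma norm_E_le (κ w : ℂ) : ‖E κ w‖ ≤ exp w.re + ‖κ‖ := by
  simpa only [E, Complex.norm_exp] using norm_add_le (Complex.exp w) κ

lemma norm_E_le_F_sub_one {κ w : ℂ} {A : ℝ} (hA : ‖κ‖ + 2 ≤ A) (hw : w.re ≤ A - 1) :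
    ‖E κ w‖ ≤ F A - 1 := by
  calc ‖E κ w‖ ≤ exp w.re + ‖κ‖ := norm_E_le κ w
    _ ≤ exp (A - 1) + (A - 2) := by gcongr; linarith
    _ ≤ F A - 1 := by rw [F]; linarith [exp_sub_one_add_le_exp A]

lemma re_iterate_E_le {κ z : ℂ} (hz : z.re ≤ ‖κ‖ + 1) (k : ℕ) :
    ((E κ)^[k] z).re ≤ F^[k] (‖κ‖ + 2) - 1 := by
  induction k with
  | zero => simp only [Function.iterate_zero, id_eq]; linarith
  | succ k ih =>
    rw [Function.iterate_succ_apply', Function.iterate_succ_apply']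
    exact (Complex.re_le_norm _).trans (norm_E_le_F_sub_one (le_iterate_F _ k) ih)

theorem abs_iterate_bound_general (κ z : ℂ) (hz : z.re ≤ κ.re + 1) :
    ∀ k : ℕ, 1 ≤ k → ‖(E κ)^[k] z‖ ≤ F^[k] (‖κ‖ + 2) := by
  have hz' : z.re ≤ ‖κ‖ + 1 := by linarith [Complex.re_le_norm κ]
  intro k hk
  obtain ⟨n, rfl⟩ : ∃ n, k = n + 1 := ⟨k - 1, by omega⟩
  rw [Function.iterate_succ_apply', Function.iterate_succ_apply']
  have h := norm_E_le_F_sub_one (le_iterate_F (‖κ‖ + 2) n) (re_iterate_E_le hz' n)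
  linarith

/-- If Re(κ) ≥ 2 and Re(z) ≤ Re(κ) + 1, then for all k ≥ 1,
    |E_κ^k(z)| ≤ F^k(|κ| + 2). -/
theorem abs_iterate_bound (κ z : ℂ) (hκ : 2 ≤ κ.re) (hz : z.re ≤ κ.re + 1) :
    ∀ k : ℕ, 1 ≤ k → ‖(E κ)^[k] z‖ ≤ F^[k] (‖κ‖ + 2) :=
  abs_iterate_bound_general κ z hz
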